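/- arXiv:1003.4014 — 5 statements merged into one kernel-verified Lean document; each statement's English description precedes it below -/
import Mathlib

section
/- Let V = ℝ^{4r,4s} carry a quaternionic structure I₁, I₂, I₃ with invariant pseudo-Euclidean metric η, and let 𝔰𝔭(r,s) = {f ∈ 𝔰𝔬(V) : [f,I₁] = [f,I₂] = [f,I₃] = 0}. Then every algebraic curvature tensor R ∈ ℛ(𝔰𝔭(r,s)) satisfies R(I_α X, Y) = -R(X, I_α Y) for all α ∈ {1,2,3} and all X, Y ∈ V; consequently R(xX, Y) = R(X, x̄Y) for all quaternions x. -/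
/-! Pairing `R(I X, Y) Z` with `W` and using the pair symmetry moves `I X` into the slot of a
value of `R(Z, W)`; since `R(Z, W)` commutes with `I` and `I` is `η`-skew, `I` then moves onto
`Y`, and pair symmetry brings it back: `η(R(I X, Y) Z, W) = -η(R(X, I Y) Z, W)`.
Nondegeneracy of `η` turns this into the first claim, and the second follows by expanding
the quaternion `x` over `1, i, j, k`. -/

section CurvatureTensor

variable {V : Type*} [AddCommGroup V] [Module ℝ V] {η : LinearMap.BilinForm ℝ V}
  {R : V → V → V →ₗ[ℝ] V}

theorem curvature_pair_symm (hsymm : ∀ x y, η x y = η y x)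
    (hskew : ∀ u v x y, η (R u v x) y + η x (R u v y) = 0)
    (hRskew : ∀ u v, R u v = -R v u)
    (hBianchi : ∀ u v w, R u v w + R v w u + R w u v = 0) (u v z w : V) :
    η (R u v z) w = η (R z w u) v := by
  have skew_last : ∀ u v z w, η (R u v z) w = -η (R u v w) z := fun u v z w => by
    linarith [hskew u v z w, hsymm z (R u v w)]
  have skew_first : ∀ u v z w, η (R u v z) w = -η (R v u z) w := fun u v z w => by
    simp [hRskew u v]
  have bianchi : ∀ u v z w, η (R u v z) w + η (R v z u) w + η (R z u v) w = 0 :=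
    fun u v z w => by simpa using congrArg (η · w) (hBianchi u v z)
  -- sum of the four cyclically permuted Bianchi identities
  linarith [bianchi u v z w, bianchi v z w u, bianchi z w u v, bianchi w u v z,
    skew_last v z w u, skew_last z w v u, skew_first w v z u, skew_last v w z u,
    skew_last w u z v, skew_first u z w v, skew_last z u w v, skew_last u v w z]

theorem curvature_apply_left_eq_neg_apply_right (hnd : ∀ x, (∀ y, η x y = 0) → x = 0)
    (hpair : ∀ u v z w, η (R u v z) w = η (R z w u) v) {J : V →ₗ[ℝ] V}
    (hJskew : ∀ a b, η (J a) b = -η a (J b)) (hcomm : ∀ u v, R u v ∘ₗ J = J ∘ₗ R u v)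
    (X Y : V) : R (J X) Y = -R X (J Y) := by
  ext u
  suffices h : ∀ v, η (R (J X) Y u + R X (J Y) u) v = 0 by
    simpa using eq_neg_of_add_eq_zero_left (hnd _ h)
  intro v
  have hJ : R u v (J X) = J (R u v X) := LinearMap.congr_fun (hcomm u v) X
  calc η (R (J X) Y u + R X (J Y) u) v
      = η (R u v (J X)) Y + η (R u v X) (J Y) := by simp [hpair]
    _ = 0 := by rw [hJ, hJskew, neg_add_cancel]

theorem curvature_add_right (hRskew : ∀ u v, R u v = -R v u)
    (hadd : ∀ u u' v, R (u + u') v = R u v + R u' v) (u v v' : V) :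
    R u (v + v') = R u v + R u v' := by
  rw [hRskew u, hadd, hRskew v u, hRskew v' u, neg_add, neg_neg, neg_neg]

theorem curvature_smul_right (hRskew : ∀ u v, R u v = -R v u)
    (hsmul : ∀ (r : ℝ) (u v : V), R (r • u) v = r • R u v) (r : ℝ) (u v : V) :
    R u (r • v) = r • R u v := by
  rw [hRskew u, hsmul, hRskew v u, smul_neg, neg_neg]

end CurvatureTensor

theorem LinearMap.BilinForm.apply_left_eq_neg_apply_right {K M : Type*} [CommRing K]
    [AddCommGroup M] [Module K M] {η : LinearMap.BilinForm K M} {J : M →ₗ[K] M}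
    (hJ : ∀ X, J (J X) = -X) (hinv : ∀ X Y, η (J X) (J Y) = η X Y) (a b : M) :
    η (J a) b = -η a (J b) := by
  rw [← map_neg, ← hinv a, map_neg, hJ, neg_neg]

theorem curvature_quaternion_compatibility_general {V : Type*} [AddCommGroup V] [Module ℝ V]
    (η : LinearMap.BilinForm ℝ V)
    (hsymm : ∀ x y, η x y = η y x)
    (hnd : ∀ x, (∀ y, η x y = 0) → x = 0)
    (I1 I2 I3 : V →ₗ[ℝ] V)
    (hI1 : ∀ X, I1 (I1 X) = -X) (hI2 : ∀ X, I2 (I2 X) = -X) (hI3 : ∀ X, I3 (I3 X) = -X)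
    (hinv1 : ∀ X Y, η (I1 X) (I1 Y) = η X Y)
    (hinv2 : ∀ X Y, η (I2 X) (I2 Y) = η X Y)
    (hinv3 : ∀ X Y, η (I3 X) (I3 Y) = η X Y)
    (R : V → V → (V →ₗ[ℝ] V))
    (hval : ∀ u v, (∀ x y, η ((R u v) x) y + η x ((R u v) y) = 0) ∧
      (R u v) ∘ₗ I1 = I1 ∘ₗ (R u v) ∧ (R u v) ∘ₗ I2 = I2 ∘ₗ (R u v) ∧
      (R u v) ∘ₗ I3 = I3 ∘ₗ (R u v))
    (hRskew : ∀ u v, R u v = - R v u)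
    (hbil1 : ∀ u u' v, R (u + u') v = R u v + R u' v)
    (hbil2 : ∀ (r : ℝ) (u v : V), R (r • u) v = r • R u v)
    (hBianchi : ∀ u v w, R u v w + R v w u + R w u v = 0) :
    (∀ X Y, R (I1 X) Y = - R X (I1 Y) ∧ R (I2 X) Y = - R X (I2 Y) ∧
      R (I3 X) Y = - R X (I3 Y)) ∧
    (∀ (x : Quaternion ℝ) (X Y : V),
      R (x.re • X + x.imI • I1 X + x.imJ • I2 X + x.imK • I3 X) Y =
        R X ((star x).re • Y + (star x).imI • I1 Y + (star x).imJ • I2 Y +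
          (star x).imK • I3 Y)) := by
  have hpair := curvature_pair_symm hsymm (fun u v => (hval u v).1) hRskew hBianchi
  have m1 := curvature_apply_left_eq_neg_apply_right hnd hpair
    (LinearMap.BilinForm.apply_left_eq_neg_apply_right hI1 hinv1) (fun u v => (hval u v).2.1)
  have m2 := curvature_apply_left_eq_neg_apply_right hnd hpair
    (LinearMap.BilinForm.apply_left_eq_neg_apply_right hI2 hinv2) (fun u v => (hval u v).2.2.1)
  have m3 := curvature_apply_left_eq_neg_apply_right hnd hpair
    (LinearMap.BilinForm.apply_left_eq_neg_apply_right hI3 hinv3) (fun u v => (hval u v).2.2.2)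
  refine ⟨fun X Y => ⟨m1 X Y, m2 X Y, m3 X Y⟩, fun x X Y => ?_⟩
  simp only [hbil1, hbil2, curvature_add_right hRskew hbil1, curvature_smul_right hRskew hbil2,
    m1, m2, m3, Quaternion.re_star, Quaternion.imI_star, Quaternion.imJ_star,
    Quaternion.imK_star]
  module

/-- On `V = ℝ^{4r,4s}` with quaternionic structure `I₁,I₂,I₃` and invariant metric `η`,
any algebraic curvature tensor `R` of type `𝔰𝔭(r,s)` satisfies
`R(I_α X, Y) = -R(X, I_α Y)` for `α = 1,2,3`, and consequently
`R(xX, Y) = R(X, x̄Y)` for every quaternion `x`. -/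
theorem curvature_quaternion_compatibility {V : Type*} [AddCommGroup V] [Module ℝ V]
    (η : LinearMap.BilinForm ℝ V)
    (hsymm : ∀ x y, η x y = η y x)
    (hnd : ∀ x, (∀ y, η x y = 0) → x = 0)
    (I1 I2 I3 : V →ₗ[ℝ] V)
    (hI1 : ∀ X, I1 (I1 X) = -X) (hI2 : ∀ X, I2 (I2 X) = -X) (hI3 : ∀ X, I3 (I3 X) = -X)
    (hI12 : ∀ X, I1 (I2 X) = I3 X) (hI21 : ∀ X, I2 (I1 X) = -(I3 X))
    (hinv1 : ∀ X Y, η (I1 X) (I1 Y) = η X Y)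
    (hinv2 : ∀ X Y, η (I2 X) (I2 Y) = η X Y)
    (hinv3 : ∀ X Y, η (I3 X) (I3 Y) = η X Y)
    (R : V → V → (V →ₗ[ℝ] V))
    (hval : ∀ u v, (∀ x y, η ((R u v) x) y + η x ((R u v) y) = 0) ∧
      (R u v) ∘ₗ I1 = I1 ∘ₗ (R u v) ∧ (R u v) ∘ₗ I2 = I2 ∘ₗ (R u v) ∧
      (R u v) ∘ₗ I3 = I3 ∘ₗ (R u v))
    (hRskew : ∀ u v, R u v = - R v u)
    (hbil1 : ∀ u u' v, R (u + u') v = R u v + R u' v)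
    (hbil2 : ∀ (r : ℝ) (u v : V), R (r • u) v = r • R u v)
    (hBianchi : ∀ u v w, R u v w + R v w u + R w u v = 0) :
    (∀ X Y, R (I1 X) Y = - R X (I1 Y) ∧ R (I2 X) Y = - R X (I2 Y) ∧
      R (I3 X) Y = - R X (I3 Y)) ∧
    (∀ (x : Quaternion ℝ) (X Y : V),
      R (x.re • X + x.imI • I1 X + x.imJ • I2 X + x.imK • I3 X) Y =
        R X ((star x).re • Y + (star x).imI • I1 Y + (star x).imJ • I2 Y +
          (star x).imK • I3 Y)) :=
  curvature_quaternion_compatibility_general η hsymm hnd I1 I2 I3 hI1 hI2 hI3 hinv1 hinv2 hinv3 R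
    hval hRskew hbil1 hbil2 hBianchi
end

section
/- For l ≥ 2, let f₁, …, f_l be an ℍ-basis of ℍ^l and let B(l) = span_ℝ{f₁, …, f_l, if₁+jf₂, …, if_{l-1}+jf_l}. Then B(l) satisfies ρ(B(l)) = B(l), where ρ(L) = span_ℝ{X, Y, jX - iY : X, Y ∈ L with jX - iY ∈ L}. Moreover, B(1) = span_ℝ{f₁} does not satisfy this: ρ(B(1)) = 0. -/
noncomputable section

def qi : Quaternion ℝ := ⟨0, 1, 0, 0⟩
def qj : Quaternion ℝ := ⟨0, 0, 1, 0⟩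
def qk : Quaternion ℝ := ⟨0, 0, 0, 1⟩

/-- `ρ(L) = span_ℝ {X, Y, jX - iY : X, Y ∈ L and jX - iY ∈ L}`. -/
def rho (n : ℕ) (L : Submodule ℝ (Fin n → Quaternion ℝ)) :
    Submodule ℝ (Fin n → Quaternion ℝ) :=
  Submodule.span ℝ {v | ∃ X Y, X ∈ L ∧ Y ∈ L ∧ qj • X - qi • Y ∈ L ∧
    (v = X ∨ v = Y ∨ v = qj • X - qi • Y)}

/-- `B(l) = span_ℝ {f₁, …, f_l, if₁+jf₂, …, if_{l-1}+jf_l}`. -/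
def Bspace (l : ℕ) (f : Fin l → (Fin l → Quaternion ℝ)) :
    Submodule ℝ (Fin l → Quaternion ℝ) :=
  Submodule.span ℝ (Set.range f ∪
    {v | ∃ t s : Fin l, (s : ℕ) = (t : ℕ) + 1 ∧ v = qi • f t + qj • f s})

/-!
For consecutive indices `t, s = t + 1` the identity `j f_s - i (-f_t) = i f_t + j f_s` exhibits
`f_t`, `f_s` and `i f_t + j f_s` as generators of `ρ(B(l))`; when `l ≥ 2` every index has a
neighbour, so all generators of `B(l)` lie in `ρ(B(l)) ⊆ B(l)`. For `l = 1` there are no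
neighbours and `B(1) = ℝ f₁`: a relation `j (a f₁) - i (b f₁) = c f₁` means
`(a j - b i - c) f₁ = 0`, which in the division ring `ℍ` forces `a = b = 0`.
-/

open Submodule

lemma rho_le (n : ℕ) (L : Submodule ℝ (Fin n → Quaternion ℝ)) : rho n L ≤ L := by
  rw [rho, span_le]
  rintro v ⟨X, Y, hX, hY, hJ, rfl | rfl | rfl⟩ <;> assumption

lemma mem_rho_of_mem {n : ℕ} {L : Submodule ℝ (Fin n → Quaternion ℝ)}
    {X Y : Fin n → Quaternion ℝ}
    (hX : X ∈ L) (hY : Y ∈ L) (hJ : qj • X - qi • Y ∈ L) :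
    X ∈ rho n L ∧ Y ∈ rho n L ∧ qj • X - qi • Y ∈ rho n L :=
  ⟨subset_span ⟨X, Y, hX, hY, hJ, .inl rfl⟩,
    subset_span ⟨X, Y, hX, hY, hJ, .inr (.inl rfl)⟩,
    subset_span ⟨X, Y, hX, hY, hJ, .inr (.inr rfl)⟩⟩

section Bspace

variable {l : ℕ} (f : Fin l → Fin l → Quaternion ℝ)

lemma apply_mem_Bspace (t : Fin l) : f t ∈ Bspace l f :=
  subset_span (.inl ⟨t, rfl⟩)

lemma qi_smul_add_qj_smul_mem_Bspace {t s : Fin l} (h : (s : ℕ) = t + 1) :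
    qi • f t + qj • f s ∈ Bspace l f :=
  subset_span (.inr ⟨t, s, h, rfl⟩)

lemma mem_rho_Bspace_of_succ {t s : Fin l} (h : (s : ℕ) = t + 1) :
    f t ∈ rho l (Bspace l f) ∧ f s ∈ rho l (Bspace l f) ∧
      qi • f t + qj • f s ∈ rho l (Bspace l f) := by
  have hJ : qj • f s - qi • -f t = qi • f t + qj • f s := by
    rw [smul_neg, sub_neg_eq_add, add_comm]
  obtain ⟨hs, ht, hg⟩ := mem_rho_of_mem (apply_mem_Bspace f s) (neg_mem (apply_mem_Bspace f t))
    (hJ ▸ qi_smul_add_qj_smul_mem_Bspace f h)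
  exact ⟨neg_neg (f t) ▸ neg_mem ht, hs, hJ ▸ hg⟩

lemma Bspace_le_rho (hl : 2 ≤ l) : Bspace l f ≤ rho l (Bspace l f) := by
  rw [Bspace, span_le]
  rintro v (⟨t, rfl⟩ | ⟨t, s, h, rfl⟩)
  · rcases Nat.eq_zero_or_pos t with h0 | hpos
    · exact (mem_rho_Bspace_of_succ f (s := ⟨1, hl⟩) (by simp [h0])).1
    · exact (mem_rho_Bspace_of_succ f (t := ⟨t - 1, by omega⟩)
        (Nat.sub_add_cancel hpos).symm).2.1
  · exact (mem_rho_Bspace_of_succ f h).2.2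

lemma rho_Bspace (hl : 2 ≤ l) : rho l (Bspace l f) = Bspace l f :=
  le_antisymm (rho_le l _) (Bspace_le_rho f hl)

end Bspace

lemma Bspace_one (f : Fin 1 → Fin 1 → Quaternion ℝ) : Bspace 1 f = span ℝ {f 0} := by
  have hempty : {v | ∃ t s : Fin 1, (s : ℕ) = t + 1 ∧ v = qi • f t + qj • f s} = ∅ :=
    Set.eq_empty_of_forall_notMem fun v ⟨t, s, h, _⟩ => by omega
  rw [Bspace, hempty, Set.union_empty, Set.range_unique]
  rfl

lemma eq_zero_of_smul_qj_sub_smul_qi_eq {a b c : ℝ}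
    (h : a • qj - b • qi = c • (1 : Quaternion ℝ)) : a = 0 ∧ b = 0 := by
  have hj : a * 1 - b * 0 = c * 0 := congrArg QuaternionAlgebra.imJ h
  have hi : a * 0 - b * 1 = c * 0 := congrArg QuaternionAlgebra.imI h
  constructor <;> linarith

lemma rho_span_singleton {n : ℕ} {v : Fin n → Quaternion ℝ} (hv : v ≠ 0) :
    rho n (span ℝ {v}) = ⊥ := by
  rw [eq_bot_iff, rho, span_le]
  rintro w ⟨X, Y, hX, hY, hJ, hw⟩
  obtain ⟨a, rfl⟩ := mem_span_singleton.mp hX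
  obtain ⟨b, rfl⟩ := mem_span_singleton.mp hY
  obtain ⟨c, hc⟩ := mem_span_singleton.mp hJ
  have hscalar : (a • qj - b • qi - c • (1 : Quaternion ℝ)) • v = 0 := by
    rw [sub_smul, sub_smul, smul_assoc, smul_assoc, smul_assoc, one_smul, smul_comm a qj v,
      smul_comm b qi v, hc, sub_self]
  obtain ⟨rfl, rfl⟩ := eq_zero_of_smul_qj_sub_smul_qi_eq
    (sub_eq_zero.mp ((smul_eq_zero.mp hscalar).resolve_right hv))
  rcases hw with rfl | rfl | rfl <;> simp

/-- For `l ≥ 2` and an `ℍ`-basis `f₁,…,f_l` of `ℍ^l`, the space `B(l)` satisfies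
`ρ(B(l)) = B(l)`; whereas `B(1)` does not: `ρ(B(1)) = 0`. -/
theorem Bspace_rho (l : ℕ) (hl : 2 ≤ l)
    (f : Module.Basis (Fin l) (Quaternion ℝ) (Fin l → Quaternion ℝ))
    (f₁ : Module.Basis (Fin 1) (Quaternion ℝ) (Fin 1 → Quaternion ℝ)) :
    rho l (Bspace l ⇑f) = Bspace l ⇑f ∧ rho 1 (Bspace 1 ⇑f₁) = ⊥ :=
  ⟨rho_Bspace f hl, by rw [Bspace_one, rho_span_singleton (f₁.ne_zero 0)]⟩

end
end

section
/- Let f₁, f₂, f₃ be an ℍ-basis of ℍ³ and A(3) = span_ℝ{f₁, f₃, if₁ + jf₂, f₂ + if₃}. Then ρ(A(3)) = 0, where ρ(L) = span_ℝ{X, Y, jX - iY : X, Y ∈ L, jX - iY ∈ L}. -/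
noncomputable section

/-!
In the coordinates of the basis `f`, `A(3)` consists of the vectors `(a + ci, d + cj, b + di)`
with `a, b, c, d` real. For `X = (a + ci, d + cj, b + di)` and `Y = (a' + c'i, d' + c'j, b' + d'i)`,
`jX - iY = (c' - a'i + aj - ck, -c - d'i + dj - c'k, d' - b'i + bj - dk)`. For this to lie in `A(3)`
the `j`- and `k`-parts of the first and third entries and the `i`- and `k`-parts of the second must
vanish, which kills `a, b, c, d, c', d'`; the two linking conditions of `A(3)` then kill `a'` and `b'`.
Hence only `X = Y = 0` enter the definition of `ρ(A(3))`.
-/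

theorem rho_eq_bot_of_forall {n : ℕ} (L : Submodule ℝ (Fin n → Quaternion ℝ))
    (hL : ∀ X ∈ L, ∀ Y ∈ L, qj • X - qi • Y ∈ L → X = 0 ∧ Y = 0) : rho n L = ⊥ := by
  rw [rho, eq_bot_iff, Submodule.span_le]
  rintro v ⟨X, Y, hX, hY, hXY, hv⟩
  obtain ⟨rfl, rfl⟩ := hL X hX Y hY hXY
  rcases hv with rfl | rfl | rfl <;> simp

theorem Submodule.mem_span_four {R M : Type*} [Ring R] [AddCommGroup M] [Module R M]
    {v₁ v₂ v₃ v₄ x : M} :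
    x ∈ span R {v₁, v₂, v₃, v₄} ↔ ∃ a b c d : R, a • v₁ + b • v₂ + c • v₃ + d • v₄ = x := by
  simp only [mem_span_insert, mem_span_singleton]
  constructor
  · rintro ⟨a, _, ⟨b, _, ⟨c, _, ⟨d, rfl⟩, rfl⟩, rfl⟩, rfl⟩
    exact ⟨a, b, c, d, by abel⟩
  · rintro ⟨a, b, c, d, rfl⟩
    exact ⟨a, _, ⟨b, _, ⟨c, _, ⟨d, rfl⟩, rfl⟩, rfl⟩, by abel⟩

@[simp] theorem qi_re : qi.re = 0 := rfl
@[simp] theorem qi_imI : qi.imI = 1 := rfl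
@[simp] theorem qi_imJ : qi.imJ = 0 := rfl
@[simp] theorem qi_imK : qi.imK = 0 := rfl
@[simp] theorem qj_re : qj.re = 0 := rfl
@[simp] theorem qj_imI : qj.imI = 0 := rfl
@[simp] theorem qj_imJ : qj.imJ = 1 := rfl
@[simp] theorem qj_imK : qj.imK = 0 := rfl

/-- The coordinates of `a f₁ + b f₃ + c (if₁ + jf₂) + d (f₂ + if₃)` in the basis `f₁, f₂, f₃`. -/
def a3Coords (a b c d : ℝ) : Fin 3 → Quaternion ℝ :=
  ![a + c • qi, d + c • qj, b + d • qi]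

theorem equivFun_eq_a3Coords_of_mem
    (f : Module.Basis (Fin 3) (Quaternion ℝ) (Fin 3 → Quaternion ℝ)) {v : Fin 3 → Quaternion ℝ}
    (hv : v ∈ Submodule.span ℝ {f 0, f 2, qi • f 0 + qj • f 1, f 1 + qi • f 2}) :
    ∃ a b c d : ℝ, f.equivFun v = a3Coords a b c d := by
  obtain ⟨a, b, c, d, rfl⟩ := Submodule.mem_span_four.mp hv
  refine ⟨a, b, c, d, ?_⟩
  simp only [map_add, LinearMapClass.map_smul_of_tower f.equivFun]
  ext k : 1
  fin_cases k <;> simp [a3Coords, ← Algebra.algebraMap_eq_smul_one, add_comm]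

theorem a3Coords_eq_zero_of_smul_sub_smul {a b c d a' b' c' d' e g h l : ℝ}
    (H : qj • a3Coords a b c d - qi • a3Coords a' b' c' d' = a3Coords e g h l) :
    a3Coords a b c d = 0 ∧ a3Coords a' b' c' d' = 0 := by
  have H0 : c' = e ∧ -a' = h ∧ a = 0 ∧ c = 0 := by
    simpa [a3Coords, Quaternion.ext_iff] using congrFun H 0
  have H1 : -c = l ∧ d' = 0 ∧ d = h ∧ c' = 0 := by
    simpa [a3Coords, Quaternion.ext_iff] using congrFun H 1
  have H2 : d' = g ∧ -b' = l ∧ b = 0 ∧ d = 0 := by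
    simpa [a3Coords, Quaternion.ext_iff] using congrFun H 2
  obtain ⟨-, ha', rfl, rfl⟩ := H0
  obtain ⟨hl, rfl, hd, rfl⟩ := H1
  obtain ⟨-, hb', rfl, rfl⟩ := H2
  obtain rfl : a' = 0 := by linarith
  obtain rfl : b' = 0 := by linarith
  constructor <;> ext k : 1 <;> fin_cases k <;> simp [a3Coords]

/-- For an `ℍ`-basis `f₁, f₂, f₃` of `ℍ³` and
`A(3) = span_ℝ {f₁, f₃, if₁+jf₂, f₂+if₃}`, one has `ρ(A(3)) = 0`. -/
theorem rho_A3_eq_bot (f : Module.Basis (Fin 3) (Quaternion ℝ) (Fin 3 → Quaternion ℝ)) :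
    rho 3 (Submodule.span ℝ
      {f 0, f 2, qi • f 0 + qj • f 1, f 1 + qi • f 2}) = ⊥ := by
  refine rho_eq_bot_of_forall _ fun X hX Y hY hXY => ?_
  obtain ⟨a, b, c, d, hx⟩ := equivFun_eq_a3Coords_of_mem f hX
  obtain ⟨a', b', c', d', hy⟩ := equivFun_eq_a3Coords_of_mem f hY
  obtain ⟨e, g, h, l, hz⟩ := equivFun_eq_a3Coords_of_mem f hXY
  rw [map_sub, map_smul, map_smul, hx, hy] at hz
  obtain ⟨hx0, hy0⟩ := a3Coords_eq_zero_of_smul_sub_smul hz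
  rw [hx0, LinearEquiv.map_eq_zero_iff] at hx
  rw [hy0, LinearEquiv.map_eq_zero_iff] at hy
  exact ⟨hx, hy⟩

end
end

section
/- Every R ∈ ℛ(𝔰𝔭(1,n+1)_{ℍp}) satisfies: R(q, iq) = -R(jq, kq), R(q, jq) = R(iq, kq), R(q, kq) = -R(iq, jq), and R(I_r p, I_s p) = 0, R(I_r p, X) = 0 for all r, s ∈ {0,1,2,3} and all X in the g-orthogonal complement ℍⁿ of ℍp ⊕ ℍq. -/
noncomputable section

/-- `I₀ = 1`, `I₁ = i`, `I₂ = j`, `I₃ = k`. -/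
def Iq : Fin 4 → Quaternion ℝ := ![1, qi, qj, qk]

/-- The `g`-orthogonal complement of `ℍp ⊕ ℍq` in a quaternionic-Hermitian space. -/
def Esub {V : Type*} [AddCommGroup V] [Module (Quaternion ℝ) V]
    (g : V → V → Quaternion ℝ) (p q : V) : Set V :=
  {v | g p v = 0 ∧ g q v = 0}

/-! `Re g(R(x, y)z, w)` is a real algebraic curvature tensor, so it has pair symmetry, and
`Re g` is nondegenerate; hence `R(x, y) = 0` as soon as `Re g(R(z, w)x, y) = 0` for all `z, w`.
Since every `R(z, w)` preserves `ℍp`, `Re g(R(z, w)(λp), v) = Re (λ c g(p, v))` vanishes for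
`v ⟂ p`. With `γ = g(R(z, w)q, q)` one has `Re g(R(z, w)(aq), bq) = Re (a γ b̄) = Re (γ b̄a)`, so
`R(aq, bq) + R(a'q, b'q) = 0` whenever `b̄a + b̄'a' = 0`, e.g. for `(a, b, a', b') = (1, i, j, k)`. -/

open Quaternion

theorem Quaternion.re_mul_comm (x y : ℍ[ℝ]) : (x * y).re = (y * x).re := by
  simp only [re_mul]
  ring

theorem pair_symm_of_bianchi {V : Type*} (B : V → V → V → V → ℝ)
    (h₁₂ : ∀ x y z w, B x y z w = -B y x z w) (h₃₄ : ∀ x y z w, B x y z w = -B x y w z)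
    (hB : ∀ x y z w, B x y z w + B y z x w + B z x y w = 0) (x y z w : V) :
    B x y z w = B z w x y := by
  linarith [hB x y z w, hB y z w x, hB z w x y, hB w x y z,
    h₃₄ y z w x, h₃₄ z w y x, h₁₂ w y z x, h₃₄ y w x z, h₃₄ w x z y,
    h₁₂ x z w y, h₃₄ z x w y, h₃₄ x y w z]

theorem re_g_comm {V : Type*} {g : V → V → ℍ[ℝ]}
    (hgh : ∀ x y, star (g y x) = g x y) (x y : V) : (g x y).re = (g y x).re := by
  rw [← hgh x y, re_star]

section Hermitian

variable {V : Type*} [AddCommGroup V] [Module ℍ[ℝ] V] {g : V → V → ℍ[ℝ]}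

theorem g_smul_right (hgs : ∀ (c : ℍ[ℝ]) (x y : V), g (c • x) y = c * g x y)
    (hgh : ∀ x y, star (g y x) = g x y) (c : ℍ[ℝ]) (x y : V) :
    g x (c • y) = g x y * star c := by
  rw [← hgh, hgs, star_mul, hgh]

theorem re_g_curvature_pair_symm (hga : ∀ x y z, g (x + y) z = g x z + g y z)
    (hgh : ∀ x y, star (g y x) = g x y) {R : V → V → V →ₗ[ℍ[ℝ]] V}
    (hRskew : ∀ x y, R x y = -R y x) (hBianchi : ∀ x y z, R x y z + R y z x + R z x y = 0)
    (hRg : ∀ x y u v, g (R x y u) v + g u (R x y v) = 0) (x y z w : V) :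
    (g (R x y z) w).re = (g (R z w x) y).re := by
  let gL : V → V →+ ℍ[ℝ] := fun w => AddMonoidHom.mk' (g · w) (hga · · w)
  refine pair_symm_of_bianchi (fun x y z w => (g (R x y z) w).re) ?_ ?_ ?_ x y z w
  · intro x y z w
    rw [hRskew x y, LinearMap.neg_apply, ← re_neg]
    exact congrArg QuaternionAlgebra.re (map_neg (gL w) _)
  · intro x y z w
    rw [re_g_comm hgh (R x y w), ← re_neg, eq_neg_of_add_eq_zero_left (hRg x y z w)]
  · intro x y z w
    have h := congrArg (fun v => (gL w v).re) (hBianchi x y z)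
    simp only [map_add, map_zero, re_add, re_zero] at h
    exact h

theorem curvature_smul_left_eq_zero_of_orthogonal
    (hgs : ∀ (c : ℍ[ℝ]) (x y : V), g (c • x) y = c * g x y)
    (hnd : ∀ v : V, (∀ w, (g v w).re = 0) → v = 0) {R : V → V → V →ₗ[ℍ[ℝ]] V}
    (hsym : ∀ x y z w, (g (R x y z) w).re = (g (R z w x) y).re) {p : V}
    (hRp : ∀ x y, ∃ c : ℍ[ℝ], R x y p = c • p) (c : ℍ[ℝ]) {v : V} (hv : g p v = 0) :
    R (c • p) v = 0 := by
  ext z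
  refine hnd _ fun w => ?_
  obtain ⟨d, hd⟩ := hRp z w
  rw [hsym, map_smul, hd, smul_smul, hgs, hv, mul_zero, re_zero]

theorem curvature_add_eq_zero_of_star_mul_add
    (hga : ∀ x y z, g (x + y) z = g x z + g y z)
    (hgs : ∀ (c : ℍ[ℝ]) (x y : V), g (c • x) y = c * g x y)
    (hgh : ∀ x y, star (g y x) = g x y)
    (hnd : ∀ v : V, (∀ w, (g v w).re = 0) → v = 0) {R : V → V → V →ₗ[ℍ[ℝ]] V}
    (hsym : ∀ x y z w, (g (R x y z) w).re = (g (R z w x) y).re) (q : V) {a b a' b' : ℍ[ℝ]}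
    (h : star b * a + star b' * a' = 0) :
    R (a • q) (b • q) + R (a' • q) (b' • q) = 0 := by
  ext z
  refine hnd _ fun w => ?_
  have hγ (c d : ℍ[ℝ]) :
      (g (R (c • q) (d • q) z) w).re = (g (R z w q) q * (star d * c)).re := by
    rw [hsym, map_smul, hgs, g_smul_right hgs hgh, re_mul_comm, mul_assoc]
  rw [LinearMap.add_apply, hga, re_add, hγ, hγ, ← re_add, ← mul_add, h, mul_zero, re_zero]

end Hermitian

theorem curvature_orthogonality_relations_general {V : Type*} [AddCommGroup V]
    [Module (Quaternion ℝ) V]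
    (g : V → V → Quaternion ℝ)
    (hga : ∀ x y z, g (x + y) z = g x z + g y z)
    (hgs : ∀ (c : Quaternion ℝ) (x y : V), g (c • x) y = c * g x y)
    (hgh : ∀ x y, star (g y x) = g x y)
    (hnd : ∀ v : V, (∀ w, (g v w).re = 0) → v = 0)
    (p q : V) (hp : g p p = 0)
    (R : V → V → (V →ₗ[Quaternion ℝ] V))
    (hRskew : ∀ x y, R x y = - R y x)
    (hBianchi : ∀ x y z, R x y z + R y z x + R z x y = 0)
    (hval : ∀ x y, (∀ u v, g ((R x y) u) v + g u ((R x y) v) = 0) ∧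
      ∃ c : Quaternion ℝ, (R x y) p = c • p) :
    R q (qi • q) = - R (qj • q) (qk • q) ∧
    R q (qj • q) = R (qi • q) (qk • q) ∧
    R q (qk • q) = - R (qi • q) (qj • q) ∧
    (∀ r s : Fin 4, R (Iq r • p) (Iq s • p) = 0) ∧
    (∀ r : Fin 4, ∀ X ∈ Esub g p q, R (Iq r • p) X = 0) := by
  have hsym := re_g_curvature_pair_symm hga hgh hRskew hBianchi fun x y => (hval x y).1
  have hq_rel {a b a' b' : ℍ[ℝ]} (h : star b * a + star b' * a' = 0) :=
    eq_neg_of_add_eq_zero_left (curvature_add_eq_zero_of_star_mul_add hga hgs hgh hnd hsym q h)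
  have hp_zero := curvature_smul_left_eq_zero_of_orthogonal hgs hnd hsym fun x y => (hval x y).2
  have hunits : star qi * 1 + star qk * qj = 0 ∧ star qj * 1 + star qi * qk = 0 ∧
      star qk * 1 + star qj * qi = 0 := by
    refine ⟨?_, ?_, ?_⟩ <;> ext <;> simp [re_mul, imI_mul, imJ_mul, imK_mul] <;>
      simp [qi, qj, qk]
  refine ⟨?_, ?_, ?_, fun r s => hp_zero _ ?_, fun r X hX => hp_zero _ hX.1⟩
  · simpa using hq_rel hunits.1
  · simpa [hRskew (qk • q)] using hq_rel hunits.2.1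
  · simpa using hq_rel hunits.2.2
  · rw [g_smul_right hgs hgh, hp, zero_mul]

/-- Every algebraic curvature tensor `R` of type `𝔰𝔭(1,n+1)_{ℍp}` satisfies
`R(q, iq) = -R(jq, kq)`, `R(q, jq) = R(iq, kq)`, `R(q, kq) = -R(iq, jq)`, and
`R(I_r p, I_s p) = 0`, `R(I_r p, X) = 0` for all `r, s` and all `X ∈ ℍⁿ`. -/
theorem curvature_orthogonality_relations {V : Type*} [AddCommGroup V]
    [Module (Quaternion ℝ) V]
    (g : V → V → Quaternion ℝ)
    (hga : ∀ x y z, g (x + y) z = g x z + g y z)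
    (hga' : ∀ x y z, g x (y + z) = g x y + g x z)
    (hgs : ∀ (c : Quaternion ℝ) (x y : V), g (c • x) y = c * g x y)
    (hgh : ∀ x y, star (g y x) = g x y)
    (hnd : ∀ v : V, (∀ w, (g v w).re = 0) → v = 0)
    (p q : V) (hp : g p p = 0) (hq : g q q = 0) (hpq : g p q = 1)
    (hspan : ∀ v : V, ∃ c d : Quaternion ℝ, ∃ e ∈ Esub g p q, v = c • p + d • q + e)
    (R : V → V → (V →ₗ[Quaternion ℝ] V))
    (hRskew : ∀ x y, R x y = - R y x)
    (hBianchi : ∀ x y z, R x y z + R y z x + R z x y = 0)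
    (hval : ∀ x y, (∀ u v, g ((R x y) u) v + g u ((R x y) v) = 0) ∧
      ∃ c : Quaternion ℝ, (R x y) p = c • p) :
    R q (qi • q) = - R (qj • q) (qk • q) ∧
    R q (qj • q) = R (qi • q) (qk • q) ∧
    R q (qk • q) = - R (qi • q) (qj • q) ∧
    (∀ r s : Fin 4, R (Iq r • p) (Iq s • p) = 0) ∧
    (∀ r : Fin 4, ∀ X ∈ Esub g p q, R (Iq r • p) X = 0) :=
  curvature_orthogonality_relations_general g hga hgs hgh hnd p q hp R hRskew hBianchi hval
end
end

section
/- Let R ∈ ℛ(𝔰𝔭(1,n+1)_{ℍp}) and write R(I_r q, I_s q) = (C_{rs}, A_{rs}, S_{rs}, D_{rs}) in components (ℍ, 𝔰𝔭(n), ℍⁿ, Im ℍ). Then the ℍⁿ-components satisfy I_t S_{rs} + I_r S_{st} + I_s S_{tr} = 0 for all r, s, t ∈ {0,1,2,3}; consequently S_{rs} = I_r S_{0s} - I_s S_{0r} for r, s ≠ 0, and S_{03} = j S_{01} - i S_{02}. -/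
/-!
Since `g(p,p) = 0` and `g(p,q) = 1`, the decomposition `V = ℍp ⊕ ℍq ⊕ ℍⁿ` is direct,
so the `ℍⁿ`-component of a vector is well defined, and that of `R(I_r q, I_s q) q` is `S_{rs}`.
By `ℍ`-linearity, `R(I_r q, I_s q)(I_t q) = I_t R(I_r q, I_s q) q`, so projecting the Bianchi
identity for `I_r q, I_s q, I_t q` onto `ℍⁿ` gives `I_t S_{rs} + I_r S_{st} + I_s S_{tr} = 0`.
The rest is algebra: `r = s = t = 0` gives `3 S_{00} = 0`, then `t = 0` expresses every `S_{rs}`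
through the `S_{0s}`, and substituting this into `(r, s, t) = (1, 2, 3)` leaves
`2 (i S_{01} + j S_{02} + k S_{03}) = 0`; multiplying by `k` gives the last claim.
-/

noncomputable section

/-- `RepQ g p q f a A X b`: the element `f` of `𝔰𝔭(1,n+1)_{ℍp}` has matrix data
`(a, A, X, b)` with respect to the decomposition `ℍp ⊕ ℍⁿ ⊕ ℍq`. -/
def RepQ {V : Type*} [AddCommGroup V] [Module (Quaternion ℝ) V]
    (g : V → V → Quaternion ℝ) (p q : V)
    (f : V →ₗ[Quaternion ℝ] V) (a : Quaternion ℝ) (A : V →ₗ[Quaternion ℝ] V)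
    (X : V) (b : Quaternion ℝ) : Prop :=
  f p = a • p ∧ f q = b • p + X - (star a) • q ∧
  ∀ v ∈ Esub g p q, f v = (-(g v X)) • p + A v

section QuaternionUnits

attribute [local simp] Quaternion.re_mul Quaternion.imI_mul Quaternion.imJ_mul Quaternion.imK_mul
  Quaternion.re_one Quaternion.imI_one Quaternion.imJ_one Quaternion.imK_one

lemma qi_mul_qj : qi * qj = qk := by ext <;> simp <;> simp [qi, qj, qk]
lemma qj_mul_qi : qj * qi = -qk := by ext <;> simp <;> simp [qi, qj, qk]
lemma qi_mul_qk : qi * qk = -qj := by ext <;> simp <;> simp [qi, qj, qk]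
lemma qk_mul_qi : qk * qi = qj := by ext <;> simp <;> simp [qi, qj, qk]
lemma qj_mul_qk : qj * qk = qi := by ext <;> simp <;> simp [qi, qj, qk]
lemma qk_mul_qj : qk * qj = -qi := by ext <;> simp <;> simp [qi, qj, qk]
lemma qk_mul_qk : qk * qk = -1 := by ext <;> simp <;> simp [qk]

end QuaternionUnits

lemma Iq_zero : Iq 0 = 1 := rfl
lemma Iq_one : Iq 1 = qi := rfl
lemma Iq_two : Iq 2 = qj := rfl
lemma Iq_three : Iq 3 = qk := rfl

instance : CharZero (Quaternion ℝ) :=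
  charZero_of_injective_algebraMap (algebraMap ℝ _).injective

structure IsHermitianForm {K V : Type*} [Ring K] [StarRing K] [AddCommGroup V] [Module K V]
    (g : V → V → K) : Prop where
  add_right : ∀ x y z, g x (y + z) = g x y + g x z
  smul_left : ∀ (c : K) x y, g (c • x) y = c * g x y
  star_comm : ∀ x y, star (g y x) = g x y

namespace IsHermitianForm

variable {K V : Type*} [Ring K] [StarRing K] [AddCommGroup V] [Module K V] {g : V → V → K}

lemma smul_right (hg : IsHermitianForm g) (c : K) (x y : V) : g x (c • y) = g x y * star c := by
  rw [← hg.star_comm, hg.smul_left, star_mul, hg.star_comm]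

lemma zero_right (hg : IsHermitianForm g) (x : V) : g x 0 = 0 := by
  simpa using hg.smul_right 0 x 0

end IsHermitianForm

section QuaternionicForm

variable {V : Type*} [AddCommGroup V] [Module (Quaternion ℝ) V] {g : V → V → Quaternion ℝ}
  {p q : V}

lemma add_mem_Esub (hg : IsHermitianForm g) {x y : V} (hx : x ∈ Esub g p q)
    (hy : y ∈ Esub g p q) : x + y ∈ Esub g p q :=
  ⟨by rw [hg.add_right, hx.1, hy.1, add_zero], by rw [hg.add_right, hx.2, hy.2, add_zero]⟩

lemma smul_mem_Esub (hg : IsHermitianForm g) (c : Quaternion ℝ) {x : V} (hx : x ∈ Esub g p q) :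
    c • x ∈ Esub g p q :=
  ⟨by rw [hg.smul_right, hx.1, zero_mul], by rw [hg.smul_right, hx.2, zero_mul]⟩

def IsEComponent (g : V → V → Quaternion ℝ) (p q v X : V) : Prop :=
  X ∈ Esub g p q ∧ ∃ c d : Quaternion ℝ, v = c • p + d • q + X

namespace IsEComponent

variable {v w X Y : V}

lemma add (hg : IsHermitianForm g) (hv : IsEComponent g p q v X) (hw : IsEComponent g p q w Y) :
    IsEComponent g p q (v + w) (X + Y) := by
  obtain ⟨hX, c, d, rfl⟩ := hv
  obtain ⟨hY, c', d', rfl⟩ := hw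
  refine ⟨add_mem_Esub hg hX hY, c + c', d + d', ?_⟩
  simp only [add_smul]
  abel

lemma smul (hg : IsHermitianForm g) (a : Quaternion ℝ) (hv : IsEComponent g p q v X) :
    IsEComponent g p q (a • v) (a • X) := by
  obtain ⟨hX, c, d, rfl⟩ := hv
  exact ⟨smul_mem_Esub hg a hX, a * c, a * d, by simp only [smul_add, smul_smul]⟩

lemma eq_zero_of_zero (hg : IsHermitianForm g) (hp : g p p = 0) (hpq : g p q = 1)
    (h : IsEComponent g p q 0 X) : X = 0 := by
  obtain ⟨⟨hpX, hqX⟩, c, d, h0⟩ := h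
  have hqp : g q p = 1 := by rw [← hg.star_comm, hpq, star_one]
  have hd : d = 0 := by
    simpa [hg.add_right, hg.smul_right, hg.zero_right, hp, hpq, hpX] using (congrArg (g p) h0).symm
  subst hd
  have hc : c = 0 := by
    simpa [hg.add_right, hg.smul_right, hg.zero_right, hqp, hqX] using (congrArg (g q) h0).symm
  simpa [hc] using h0.symm

end IsEComponent

lemma RepQ.isEComponent_apply_right {f A : V →ₗ[Quaternion ℝ] V} {a b : Quaternion ℝ} {X : V}
    (h : RepQ g p q f a A X b) (hX : X ∈ Esub g p q) : IsEComponent g p q (f q) X :=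
  ⟨hX, b, -star a, by rw [h.2.1, neg_smul, sub_eq_add_neg]; abel⟩

lemma cyclic_sum_eq_zero_of_bianchi (hg : IsHermitianForm g) (hp : g p p = 0) (hpq : g p q = 1)
    {R : V → V → V →ₗ[Quaternion ℝ] V} (hBianchi : ∀ x y z, R x y z + R y z x + R z x y = 0)
    {ι : Type*} (u : ι → Quaternion ℝ) {S : ι → ι → V}
    (hS : ∀ r s, IsEComponent g p q (R (u r • q) (u s • q) q) (S r s)) (r s t : ι) :
    u t • S r s + u r • S s t + u s • S t r = 0 := by
  have hsum := (((hS r s).smul hg (u t)).add hg ((hS s t).smul hg (u r))).add hg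
    ((hS t r).smul hg (u s))
  have hB : u t • R (u r • q) (u s • q) q + u r • R (u s • q) (u t • q) q
      + u s • R (u t • q) (u r • q) q = 0 := by
    simpa only [map_smul] using hBianchi (u r • q) (u s • q) (u t • q)
  rw [hB] at hsum
  exact hsum.eq_zero_of_zero hg hp hpq

def IsQuaternionCyclic (S : Fin 4 → Fin 4 → V) : Prop :=
  ∀ r s t, Iq t • S r s + Iq r • S s t + Iq s • S t r = 0

namespace IsQuaternionCyclic

variable {S : Fin 4 → Fin 4 → V}

lemma apply_zero_zero (hS : IsQuaternionCyclic S) : S 0 0 = 0 := by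
  have h := hS 0 0 0
  simp only [Iq_zero, one_smul] at h
  have h3 : (3 : Quaternion ℝ) • S 0 0 = 0 := by
    rw [show (3 : Quaternion ℝ) = 1 + 1 + 1 by norm_num, add_smul, add_smul, one_smul, h]
  exact (smul_eq_zero.mp h3).resolve_left three_ne_zero

lemma apply_zero_right (hS : IsQuaternionCyclic S) (r : Fin 4) : S r 0 = -S 0 r := by
  have h := hS r 0 0
  simp only [Iq_zero, one_smul, hS.apply_zero_zero, smul_zero, add_zero] at h
  exact eq_neg_of_add_eq_zero_left h

lemma eq_smul_sub_smul (hS : IsQuaternionCyclic S) (r s : Fin 4) :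
    S r s = Iq r • S 0 s - Iq s • S 0 r := by
  have h := hS r s 0
  rw [Iq_zero, one_smul, hS.apply_zero_right s, smul_neg] at h
  rw [← sub_eq_zero, ← h]
  abel

lemma apply_zero_three (hS : IsQuaternionCyclic S) : S 0 3 = qj • S 0 1 - qi • S 0 2 := by
  have h := hS 1 2 3
  rw [hS.eq_smul_sub_smul 1 2, hS.eq_smul_sub_smul 2 3, hS.eq_smul_sub_smul 3 1] at h
  simp only [Iq_one, Iq_two, Iq_three, smul_sub, smul_smul, qk_mul_qi, qk_mul_qj, qi_mul_qj,
    qi_mul_qk, qj_mul_qk, qj_mul_qi, neg_smul, sub_neg_eq_add] at h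
  have hsum : qi • S 0 1 + qj • S 0 2 + qk • S 0 3 = 0 := by
    have h2 : (2 : Quaternion ℝ) • (qi • S 0 1 + qj • S 0 2 + qk • S 0 3) = 0 := by
      rw [two_smul, ← h]
      abel
    exact (smul_eq_zero.mp h2).resolve_left two_ne_zero
  have hk := congrArg (qk • ·) hsum
  simp only [smul_add, smul_smul, qk_mul_qi, qk_mul_qj, qk_mul_qk, neg_smul, one_smul,
    smul_zero] at hk
  rw [eq_comm, ← sub_eq_zero, ← hk]
  abel

end IsQuaternionCyclic

end QuaternionicForm

theorem curvature_S_components_general {V : Type*} [AddCommGroup V] [Module (Quaternion ℝ) V]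
    (g : V → V → Quaternion ℝ)
    (hga' : ∀ x y z, g x (y + z) = g x y + g x z)
    (hgs : ∀ (c : Quaternion ℝ) (x y : V), g (c • x) y = c * g x y)
    (hgh : ∀ x y, star (g y x) = g x y)
    (p q : V) (hp : g p p = 0) (hpq : g p q = 1)
    (R : V → V → (V →ₗ[Quaternion ℝ] V))
    (hBianchi : ∀ x y z, R x y z + R y z x + R z x y = 0)
    (C D : Fin 4 → Fin 4 → Quaternion ℝ)
    (A : Fin 4 → Fin 4 → (V →ₗ[Quaternion ℝ] V))
    (S : Fin 4 → Fin 4 → V)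
    (hS : ∀ r s, S r s ∈ Esub g p q)
    (hRep : ∀ r s, RepQ g p q (R (Iq r • q) (Iq s • q)) (C r s) (A r s) (S r s) (D r s)) :
    (∀ r s t : Fin 4, Iq t • S r s + Iq r • S s t + Iq s • S t r = 0) ∧
    (∀ r s : Fin 4, r ≠ 0 → s ≠ 0 → S r s = Iq r • S 0 s - Iq s • S 0 r) ∧
    (S 0 3 = qj • S 0 1 - qi • S 0 2) := by
  have hg : IsHermitianForm g := ⟨hga', hgs, hgh⟩
  have hcyc : IsQuaternionCyclic S := cyclic_sum_eq_zero_of_bianchi hg hp hpq hBianchi Iq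
    fun r s => (hRep r s).isEComponent_apply_right (hS r s)
  exact ⟨hcyc, fun r s _ _ => hcyc.eq_smul_sub_smul r s, hcyc.apply_zero_three⟩

/-- For `R ∈ ℛ(𝔰𝔭(1,n+1)_{ℍp})` with components
`R(I_r q, I_s q) = (C_{rs}, A_{rs}, S_{rs}, D_{rs})`, the `ℍⁿ`-components satisfy
`I_t S_{rs} + I_r S_{st} + I_s S_{tr} = 0`; consequently
`S_{rs} = I_r S_{0s} - I_s S_{0r}` for `r, s ≠ 0`, and `S₀₃ = j S₀₁ - i S₀₂`. -/
theorem curvature_S_components {V : Type*} [AddCommGroup V] [Module (Quaternion ℝ) V]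
    (g : V → V → Quaternion ℝ)
    (hga : ∀ x y z, g (x + y) z = g x z + g y z)
    (hga' : ∀ x y z, g x (y + z) = g x y + g x z)
    (hgs : ∀ (c : Quaternion ℝ) (x y : V), g (c • x) y = c * g x y)
    (hgh : ∀ x y, star (g y x) = g x y)
    (p q : V) (hp : g p p = 0) (hq : g q q = 0) (hpq : g p q = 1)
    (hspan : ∀ v : V, ∃ c d : Quaternion ℝ, ∃ e ∈ Esub g p q, v = c • p + d • q + e)
    (R : V → V → (V →ₗ[Quaternion ℝ] V))
    (hRskew : ∀ x y, R x y = - R y x)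
    (hBianchi : ∀ x y z, R x y z + R y z x + R z x y = 0)
    (C D : Fin 4 → Fin 4 → Quaternion ℝ)
    (A : Fin 4 → Fin 4 → (V →ₗ[Quaternion ℝ] V))
    (S : Fin 4 → Fin 4 → V)
    (hS : ∀ r s, S r s ∈ Esub g p q)
    (hRep : ∀ r s, RepQ g p q (R (Iq r • q) (Iq s • q)) (C r s) (A r s) (S r s) (D r s)) :
    (∀ r s t : Fin 4, Iq t • S r s + Iq r • S s t + Iq s • S t r = 0) ∧
    (∀ r s : Fin 4, r ≠ 0 → s ≠ 0 → S r s = Iq r • S 0 s - Iq s • S 0 r) ∧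
    (S 0 3 = qj • S 0 1 - qi • S 0 2) :=
  curvature_S_components_general g hga' hgs hgh p q hp hpq R hBianchi C D A S hS hRep

end
end
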